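/- arXiv:1304.5610 — 3 statements merged into one kernel-verified Lean document; each statement's English description precedes it below -/
import Mathlib

section
/- Consider standard approximate Modified Policy Iteration (MPI) with parameter m ≥ 0 on a finite MDP: starting from v_0 : X → ℝ, for each k ≥ 1 pick π_k greedy with respect to v_{k−1} and set v_k = (T_{π_k})^{m+1} v_{k−1} + ε_k. If there exists ε > 0 such that ‖ε_k‖_∞ ≤ ε for all k ≥ 1, then for every k ≥ 1 the loss of running the stationary policy π_k instead of an optimal policy satisfies ‖v_* − v_{π_k}‖_∞ ≤ (2(γ − γ^k)/(1 − γ)²) · ε + (2γ^k/(1 − γ)) · ‖v_* − v_0‖_∞. -/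
/-!
Along the iteration keep two one-sided bounds: `v⋆ ≤ vₙ + dₙ`, and `vₙ ≤ T_{πₙ₊₁} vₙ + bₙ` on the
Bellman residual. A greedy step dominates every `T_π`, and each `T_π` is monotone and shifts
additive constants by the factor γ, so the bounds propagate as
`dₙ₊₁ = γ dₙ + γ (1 - γ^m)/(1 - γ) bₙ + ε` and `bₙ₊₁ = γ^(m+1) bₙ + (1 + γ) ε`. The potential
`Φₙ = dₙ + bₙ/(1 - γ)` then obeys `Φₙ₊₁ = γ Φₙ + 2ε/(1 - γ)`, with `Φ₀ = 2‖v⋆ - v₀‖/(1 - γ)`.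
Finally `v_{πₙ₊₁} ≥ vₙ - bₙ/(1 - γ)`, which bounds the loss of `πₙ₊₁` by `γ Φₙ`.
-/

structure MDP (X A : Type) [Fintype X] [Fintype A] where
  P : X → A → X → ℝ
  r : X → A → ℝ
  γ : ℝ
  P_nonneg : ∀ x a y, 0 ≤ P x a y
  P_sum : ∀ x a, ∑ y, P x a y = 1
  γ_pos : 0 < γ
  γ_lt_one : γ < 1

namespace MDP

variable {X A : Type} [Fintype X] [Fintype A]

/-- Bellman operator of a stationary policy. -/
noncomputable def T (M : MDP X A) (π : X → A) (v : X → ℝ) : X → ℝ :=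
  fun x => M.r x (π x) + M.γ * ∑ y, M.P x (π x) y * v y

/-- Action-value function. -/
noncomputable def Q (M : MDP X A) (v : X → ℝ) (x : X) (a : A) : ℝ :=
  M.r x a + M.γ * ∑ y, M.P x a y * v y

/-- `π` is greedy with respect to `v` (action form). -/
def IsGreedy (M : MDP X A) (π : X → A) (v : X → ℝ) : Prop :=
  ∀ x, M.T π v x = ⨆ a : A, M.Q v x a

/-- `π` is greedy with respect to `v` (componentwise max over policies form). -/
def IsGreedyPol (M : MDP X A) (π : X → A) (v : X → ℝ) : Prop :=
  ∀ x, M.T π v x = ⨆ π' : X → A, M.T π' v x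

/-- Composed Bellman operator `T_{π_k} T_{π_{k-1}} ⋯ T_{π_{k-n+1}}`. -/
noncomputable def Tcomp (M : MDP X A) (π : ℤ → X → A) : ℕ → ℤ → (X → ℝ) → (X → ℝ)
  | 0, _ => id
  | (n+1), k => fun v => M.T (π k) (M.Tcomp π n (k-1) v)

/-- Transition kernel of a stationary policy, as a matrix. -/
def Pmat (M : MDP X A) (π : X → A) : Matrix X X ℝ :=
  Matrix.of fun x y => M.P x (π x) y

/-- Composed kernel `P_{π_k} P_{π_{k-1}} ⋯ P_{π_{k-n+1}}`. -/
noncomputable def Pcomp (M : MDP X A) [DecidableEq X] (π : ℤ → X → A) : ℕ → ℤ → Matrix X X ℝ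
  | 0, _ => 1
  | (n+1), k => M.Pmat (π k) * M.Pcomp π n (k-1)

/-- `n`-fold products `(γ P_{π_1}) ⋯ (γ P_{π_n})`. -/
def prodSet (M : MDP X A) [DecidableEq X] : ℕ → Set (Matrix X X ℝ)
  | 0 => {1}
  | (n+1) => {Q | ∃ (π : X → A) (Q' : Matrix X X ℝ), Q' ∈ M.prodSet n ∧ Q = (M.γ • M.Pmat π) * Q'}

/-- `𝕡_n`: convex combinations of `n`-fold products of discounted kernels. -/
noncomputable def Gamma (M : MDP X A) [DecidableEq X] (n : ℕ) : Set (Matrix X X ℝ) :=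
  convexHull ℝ (M.prodSet n)

end MDP

/-- Residual `b_k = T_{π_{k+1}} v_k − T_{π_{k+1},ℓ} T_{π_{k+1}} v_k`. -/
noncomputable def bres {X A : Type} [Fintype X] [Fintype A] (M : MDP X A) (π : ℤ → X → A) (ℓ : ℕ)
    (v : ℕ → X → ℝ) (k : ℕ) : X → ℝ :=
  fun x => M.T (π ((k : ℤ) + 1)) (v k) x
    - M.Tcomp π ℓ ((k : ℤ) + 1) (M.T (π ((k : ℤ) + 1)) (v k)) x

/-- Distance `d_k = v_* − v_k + ε_k`. -/
noncomputable def dres {X : Type} (vstar : X → ℝ) (v err : ℕ → X → ℝ) (k : ℕ) : X → ℝ :=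
  fun x => vstar x - v k x + err k x

namespace MDP

variable {X A : Type} [Fintype X] [Fintype A] (M : MDP X A)

theorem one_sub_γ_pos : 0 < 1 - M.γ := sub_pos.2 M.γ_lt_one

theorem T_le_T_add (π : X → A) {u w : X → ℝ} {c : ℝ} (h : ∀ y, u y ≤ w y + c) (x : X) :
    M.T π u x ≤ M.T π w x + M.γ * c := by
  have hsum : ∑ y, M.P x (π x) y * u y ≤ (∑ y, M.P x (π x) y * w y) + c :=
    calc ∑ y, M.P x (π x) y * u y ≤ ∑ y, M.P x (π x) y * (w y + c) :=
          Finset.sum_le_sum fun y _ => mul_le_mul_of_nonneg_left (h y) (M.P_nonneg x (π x) y)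
      _ = (∑ y, M.P x (π x) y * w y) + c := by
          simp only [mul_add, Finset.sum_add_distrib, ← Finset.sum_mul, M.P_sum, one_mul]
  have := mul_le_mul_of_nonneg_left hsum M.γ_pos.le
  simp only [T]
  linarith

theorem iterate_T_le_iterate_T_add (π : X → A) {u w : X → ℝ} {c : ℝ} (h : ∀ y, u y ≤ w y + c)
    (n : ℕ) (x : X) : (M.T π)^[n] u x ≤ (M.T π)^[n] w x + M.γ ^ n * c := by
  induction n generalizing x with
  | zero => simpa using h x
  | succ n ih =>
    simp only [Function.iterate_succ_apply']
    calc M.T π ((M.T π)^[n] u) x ≤ M.T π ((M.T π)^[n] w) x + M.γ * (M.γ ^ n * c) :=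
          M.T_le_T_add π ih x
      _ = M.T π ((M.T π)^[n] w) x + M.γ ^ (n + 1) * c := by ring

theorem le_iterate_T_add {π : X → A} {w : X → ℝ} {b : ℝ} (h : ∀ y, w y ≤ M.T π w y + b)
    (n : ℕ) (x : X) : w x ≤ (M.T π)^[n] w x + (1 - M.γ ^ n) / (1 - M.γ) * b := by
  induction n with
  | zero => simp
  | succ n ih =>
    have hstep := M.iterate_T_le_iterate_T_add π h n x
    rw [← Function.iterate_succ_apply] at hstep
    have hgeom : (1 - M.γ ^ n) / (1 - M.γ) + M.γ ^ n = (1 - M.γ ^ (n + 1)) / (1 - M.γ) := by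
      field_simp [M.one_sub_γ_pos.ne']
      ring
    rw [← hgeom]
    linarith

theorem le_fixedPoint_add {π : X → A} {u w : X → ℝ} {b : ℝ} (hu : M.T π u = u)
    (h : ∀ y, w y ≤ M.T π w y + b) (x : X) : w x ≤ u x + b / (1 - M.γ) := by
  have : Nonempty X := ⟨x⟩
  obtain ⟨x₀, hx₀⟩ := Finite.exists_max fun y => w y - u y
  have hgap : ∀ y, w y ≤ u y + (w x₀ - u x₀) := fun y => by linarith [hx₀ y]
  have hcontract : w x₀ - u x₀ ≤ M.γ * (w x₀ - u x₀) + b := by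
    have := M.T_le_T_add π hgap x₀
    rw [hu] at this
    linarith [h x₀]
  have : w x₀ - u x₀ ≤ b / (1 - M.γ) := by
    rw [le_div_iff₀ M.one_sub_γ_pos]
    linarith
  linarith [hx₀ x]

theorem IsGreedy.T_le {M : MDP X A} {πg : X → A} {v : X → ℝ} (hg : M.IsGreedy πg v)
    (π : X → A) (x : X) : M.T π v x ≤ M.T πg v x := by
  rw [hg x]
  exact le_ciSup (Finite.bddAbove_range fun a => M.Q v x a) (π x)

variable {M} {vpi : (X → A) → X → ℝ} {vstar : X → ℝ}

theorem le_optValue (hvstar : ∀ x, vstar x = ⨆ π : X → A, vpi π x) (π : X → A) (x : X) :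
    vpi π x ≤ vstar x := by
  rw [hvstar]
  exact le_ciSup (Finite.bddAbove_range fun π : X → A => vpi π x) π

theorem optValue_le_T_greedy_add (hvpi : ∀ π : X → A, M.T π (vpi π) = vpi π)
    (hvstar : ∀ x, vstar x = ⨆ π : X → A, vpi π x) {πg : X → A} {v : X → ℝ} {d : ℝ}
    (hg : M.IsGreedy πg v) (hd : ∀ y, vstar y ≤ v y + d) (x : X) :
    vstar x ≤ M.T πg v x + M.γ * d := by
  have : Nonempty (X → A) := ⟨πg⟩
  rw [hvstar]
  refine ciSup_le fun π => ?_
  have hπ : ∀ y, vpi π y ≤ v y + d := fun y => (le_optValue hvstar π y).trans (hd y)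
  calc vpi π x = M.T π (vpi π) x := by rw [hvpi]
    _ ≤ M.T π v x + M.γ * d := M.T_le_T_add π hπ x
    _ ≤ M.T πg v x + M.γ * d := by linarith [hg.T_le π x]

theorem optValue_le_value_add (hvpi : ∀ π : X → A, M.T π (vpi π) = vpi π)
    (hvstar : ∀ x, vstar x = ⨆ π : X → A, vpi π x) {p : X → A} {v : X → ℝ} {d b : ℝ}
    (hg : M.IsGreedy p v) (hd : ∀ y, vstar y ≤ v y + d) (hb : ∀ y, v y ≤ M.T p v y + b)
    (x : X) : vstar x ≤ vpi p x + M.γ * (d + b / (1 - M.γ)) := by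
  have hv : ∀ y, v y ≤ vpi p y + b / (1 - M.γ) := M.le_fixedPoint_add (hvpi p) hb
  have := M.T_le_T_add p hv x
  rw [hvpi p] at this
  linarith [optValue_le_T_greedy_add hvpi hvstar hg hd x]

theorem mpi_residual_step {p p' : X → A} {v v' : X → ℝ} {m : ℕ} {b ε : ℝ}
    (hv' : ∀ y, |v' y - (M.T p)^[m + 1] v y| ≤ ε) (hg' : M.IsGreedy p' v')
    (hb : ∀ y, v y ≤ M.T p v y + b) (x : X) :
    v' x ≤ M.T p' v' x + (M.γ ^ (m + 1) * b + (1 + M.γ) * ε) := by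
  have hcontract := M.iterate_T_le_iterate_T_add p hb (m + 1) x
  rw [← Function.iterate_succ_apply (M.T p) (m + 1) v,
    Function.iterate_succ_apply' (M.T p) (m + 1) v] at hcontract
  have hv'_ge : ∀ y, (M.T p)^[m + 1] v y ≤ v' y + ε := fun y => by linarith [(abs_le.1 (hv' y)).1]
  have herr := M.T_le_T_add p hv'_ge x
  linarith [(abs_le.1 (hv' x)).2, hg'.T_le p x]

theorem mpi_distance_step (hvpi : ∀ π : X → A, M.T π (vpi π) = vpi π)
    (hvstar : ∀ x, vstar x = ⨆ π : X → A, vpi π x) {p : X → A} {v v' : X → ℝ} {m : ℕ}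
    {d b ε : ℝ} (hg : M.IsGreedy p v) (hd : ∀ y, vstar y ≤ v y + d)
    (hb : ∀ y, v y ≤ M.T p v y + b) (hv' : ∀ y, |v' y - (M.T p)^[m + 1] v y| ≤ ε) (x : X) :
    vstar x ≤ v' x + (M.γ * d + (1 - M.γ ^ m) / (1 - M.γ) * (M.γ * b) + ε) := by
  have hTv := M.le_iterate_T_add (M.T_le_T_add p hb) m x
  rw [← Function.iterate_succ_apply] at hTv
  linarith [optValue_le_T_greedy_add hvpi hvstar hg hd x, (abs_le.1 (hv' x)).1]

theorem mpi_exists_bounds (hvpi : ∀ π : X → A, M.T π (vpi π) = vpi π)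
    (hvstar : ∀ x, vstar x = ⨆ π : X → A, vpi π x) {m : ℕ} {v : ℕ → X → ℝ} {π : ℕ → X → A}
    {ε Δ : ℝ} (hgreedy : ∀ n, M.IsGreedy (π (n + 1)) (v n))
    (hv : ∀ n y, |v (n + 1) y - (M.T (π (n + 1)))^[m + 1] (v n) y| ≤ ε)
    (hΔ : ∀ y, |vstar y - v 0 y| ≤ Δ) (n : ℕ) :
    ∃ d b, (∀ y, vstar y ≤ v n y + d) ∧ (∀ y, v n y ≤ M.T (π (n + 1)) (v n) y + b) ∧
      d + b / (1 - M.γ) ≤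
        M.γ ^ n * (2 * Δ / (1 - M.γ)) + (1 - M.γ ^ n) / (1 - M.γ) * (2 * ε / (1 - M.γ)) := by
  have hγ : 1 - M.γ ≠ 0 := M.one_sub_γ_pos.ne'
  induction n with
  | zero =>
    have hd : ∀ y, vstar y ≤ v 0 y + Δ := fun y => by linarith [(abs_le.1 (hΔ y)).2]
    refine ⟨Δ, (1 + M.γ) * Δ, hd, fun y => ?_, le_of_eq ?_⟩
    · linarith [(abs_le.1 (hΔ y)).1, optValue_le_T_greedy_add hvpi hvstar (hgreedy 0) hd y]
    · field_simp
      ring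
  | succ n ih =>
    obtain ⟨d, b, hd, hb, hΦ⟩ := ih
    refine ⟨_, _, mpi_distance_step hvpi hvstar (hgreedy n) hd hb (hv n),
      mpi_residual_step (hv n) (hgreedy (n + 1)) hb, ?_⟩
    have hpot : M.γ * d + (1 - M.γ ^ m) / (1 - M.γ) * (M.γ * b) + ε
        + (M.γ ^ (m + 1) * b + (1 + M.γ) * ε) / (1 - M.γ)
        = M.γ * (d + b / (1 - M.γ)) + 2 * ε / (1 - M.γ) := by
      field_simp
      ring
    have hclosed : M.γ ^ (n + 1) * (2 * Δ / (1 - M.γ))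
          + (1 - M.γ ^ (n + 1)) / (1 - M.γ) * (2 * ε / (1 - M.γ))
        = M.γ * (M.γ ^ n * (2 * Δ / (1 - M.γ))
          + (1 - M.γ ^ n) / (1 - M.γ) * (2 * ε / (1 - M.γ))) + 2 * ε / (1 - M.γ) := by
      field_simp
      ring
    rw [hpot, hclosed]
    linarith [mul_le_mul_of_nonneg_left hΦ M.γ_pos.le]

theorem mpi_optValue_sub_value_le (hvpi : ∀ π : X → A, M.T π (vpi π) = vpi π)
    (hvstar : ∀ x, vstar x = ⨆ π : X → A, vpi π x) {m : ℕ} {v : ℕ → X → ℝ} {π : ℕ → X → A}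
    {ε Δ : ℝ} (hgreedy : ∀ n, M.IsGreedy (π (n + 1)) (v n))
    (hv : ∀ n y, |v (n + 1) y - (M.T (π (n + 1)))^[m + 1] (v n) y| ≤ ε)
    (hΔ : ∀ y, |vstar y - v 0 y| ≤ Δ) (n : ℕ) (x : X) :
    vstar x - vpi (π (n + 1)) x ≤
      2 * (M.γ - M.γ ^ (n + 1)) / (1 - M.γ) ^ 2 * ε + 2 * M.γ ^ (n + 1) / (1 - M.γ) * Δ := by
  obtain ⟨d, b, hd, hb, hΦ⟩ := mpi_exists_bounds hvpi hvstar hgreedy hv hΔ n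
  have hclosed : M.γ * (M.γ ^ n * (2 * Δ / (1 - M.γ))
        + (1 - M.γ ^ n) / (1 - M.γ) * (2 * ε / (1 - M.γ)))
      = 2 * (M.γ - M.γ ^ (n + 1)) / (1 - M.γ) ^ 2 * ε + 2 * M.γ ^ (n + 1) / (1 - M.γ) * Δ := by
    field_simp [M.one_sub_γ_pos.ne']
    ring
  rw [← hclosed]
  linarith [optValue_le_value_add hvpi hvstar (hgreedy n) hd hb x,
    mul_le_mul_of_nonneg_left hΦ M.γ_pos.le]

end MDP

theorem mpi_standard_performance_bound_general
    {X A : Type} [Fintype X] [Fintype A]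
    (M : MDP X A)
    (vpi : (X → A) → X → ℝ) (hvpi : ∀ π : X → A, M.T π (vpi π) = vpi π)
    (vstar : X → ℝ) (hvstar : ∀ x, vstar x = ⨆ π : X → A, vpi π x)
    (m : ℕ) (v : ℕ → X → ℝ) (π : ℕ → X → A) (err : ℕ → X → ℝ)
    (hgreedy : ∀ k : ℕ, 1 ≤ k → M.IsGreedy (π k) (v (k - 1)))
    (hv : ∀ k : ℕ, 1 ≤ k → v k = fun x => (M.T (π k))^[m + 1] (v (k - 1)) x + err k x)
    (ε : ℝ) (herr : ∀ k : ℕ, 1 ≤ k → (⨆ x, |err k x|) ≤ ε)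
    (k : ℕ) (hk : 1 ≤ k) :
    (⨆ x, |vstar x - vpi (π k) x|) ≤
      2 * (M.γ - M.γ ^ k) / (1 - M.γ) ^ 2 * ε
        + 2 * M.γ ^ k / (1 - M.γ) * (⨆ x, |vstar x - v 0 x|) := by
  obtain ⟨n, rfl⟩ : ∃ n, k = n + 1 := ⟨k - 1, by omega⟩
  set Δ := ⨆ x, |vstar x - v 0 x|
  have hΔ : ∀ x, |vstar x - v 0 x| ≤ Δ := fun x =>
    le_ciSup (f := fun x => |vstar x - v 0 x|) (Finite.bddAbove_range _) x
  have hv' : ∀ n x, |v (n + 1) x - (M.T (π (n + 1)))^[m + 1] (v n) x| ≤ ε := fun n x => by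
    simpa [hv (n + 1) n.succ_pos] using
      (le_ciSup (f := fun x => |err (n + 1) x|) (Finite.bddAbove_range _) x).trans
        (herr (n + 1) n.succ_pos)
  have hgreedy' : ∀ n, M.IsGreedy (π (n + 1)) (v n) := fun n => by
    simpa using hgreedy (n + 1) n.succ_pos
  refine Real.iSup_le (fun x => ?_) ?_
  · rw [abs_of_nonneg (sub_nonneg.2 (MDP.le_optValue hvstar _ x))]
    exact MDP.mpi_optValue_sub_value_le hvpi hvstar hgreedy' hv' hΔ n x
  · have hε : 0 ≤ ε := (Real.iSup_nonneg fun x => abs_nonneg (err 1 x)).trans (herr 1 le_rfl)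
    have hΔ₀ : 0 ≤ Δ := Real.iSup_nonneg fun x => abs_nonneg _
    have hγ₀ := M.γ_pos
    have hγ₁ := M.one_sub_γ_pos
    have : 0 ≤ M.γ - M.γ ^ (n + 1) :=
      sub_nonneg.2 (pow_le_of_le_one M.γ_pos.le M.γ_lt_one.le n.succ_ne_zero)
    positivity

/-- Performance bound for standard approximate MPI (Theorem 1 of the paper). -/
theorem mpi_standard_performance_bound
    {X A : Type} [Fintype X] [Fintype A] [Nonempty X] [Nonempty A]
    (M : MDP X A)
    (vpi : (X → A) → X → ℝ) (hvpi : ∀ π : X → A, M.T π (vpi π) = vpi π)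
    (vstar : X → ℝ) (hvstar : ∀ x, vstar x = ⨆ π : X → A, vpi π x)
    (m : ℕ) (v : ℕ → X → ℝ) (π : ℕ → X → A) (err : ℕ → X → ℝ)
    (hgreedy : ∀ k : ℕ, 1 ≤ k → M.IsGreedy (π k) (v (k - 1)))
    (hv : ∀ k : ℕ, 1 ≤ k → v k = fun x => (M.T (π k))^[m + 1] (v (k - 1)) x + err k x)
    (ε : ℝ) (hε : 0 < ε) (herr : ∀ k : ℕ, 1 ≤ k → (⨆ x, |err k x|) ≤ ε)
    (k : ℕ) (hk : 1 ≤ k) :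
    (⨆ x, |vstar x - vpi (π k) x|) ≤
      2 * (M.γ - M.γ ^ k) / (1 - M.γ) ^ 2 * ε
        + 2 * M.γ ^ k / (1 - M.γ) * (⨆ x, |vstar x - v 0 x|) :=
  mpi_standard_performance_bound_general M vpi hvpi vstar hvstar m v π err hgreedy hv ε herr k hk
end

section
/- In non-stationary approximate MPI with parameters m ≥ 0 and ℓ ≥ 1 on a finite MDP, the initial residual b_0 = T_{π_1} v_0 − (T_{π_1})^ℓ T_{π_1} v_0 satisfies the pointwise inequality b_0 ≤ ∑_{i=1}^{ℓ} (γ P_{π_1})^{i} (γ P_{π_*} − I) d_0, where π_* is any optimal policy (i.e., any policy with v_{π_*} = v_*), π_1 is the first policy generated by MPI (greedy with respect to v_0), and d_0 = v_* − v_0. -/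
/-! Telescoping gives `b₀ = ∑_{i=1}^{ℓ} (γ P_{π₁})^i (v₀ − T_{π₁} v₀)`. Greediness of `π₁` gives
`v₀ − T_{π₁} v₀ ≤ v₀ − T_{π_*} v₀ = (γ P_{π_*} − I)(v_* − v₀)`, the equality because `v_*` is the
fixed point of `T_{π_*}`; the nonnegative matrices `(γ P_{π₁})^i` preserve this inequality. -/

open Matrix

theorem Matrix.mulVec_mono_of_nonneg {m n α : Type*} [Fintype n] [Semiring α] [PartialOrder α]
    [IsOrderedRing α] {B : Matrix m n α} (hB : ∀ i j, 0 ≤ B i j) {u w : n → α} (h : u ≤ w) :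
    B *ᵥ u ≤ B *ᵥ w := fun i =>
  Finset.sum_le_sum fun j _ => mul_le_mul_of_nonneg_left (h j) (hB i j)

namespace MDP

variable {X A : Type} [Fintype X] [Fintype A] (M : MDP X A)

theorem discounted_Pmat_nonneg (π : X → A) (x y : X) : 0 ≤ (M.γ • M.Pmat π) x y :=
  mul_nonneg M.γ_pos.le (M.P_nonneg x (π x) y)

theorem T_sub_T (π : X → A) (u w : X → ℝ) :
    M.T π u - M.T π w = (M.γ • M.Pmat π) *ᵥ (u - w) := by
  ext x
  simp only [Pi.sub_apply, T, mulVec, dotProduct, Matrix.smul_apply, Pmat,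
    of_apply, smul_eq_mul, add_sub_add_left_eq_sub, ← mul_sub, ← Finset.sum_sub_distrib,
    Finset.mul_sum, mul_assoc]

theorem iterate_T_sub_iterate_T [DecidableEq X] (π : X → A) (n : ℕ) (u w : X → ℝ) :
    (M.T π)^[n] u - (M.T π)^[n] w = (M.γ • M.Pmat π) ^ n *ᵥ (u - w) := by
  induction n with
  | zero => simp
  | succ n ih =>
    rw [Function.iterate_succ_apply', Function.iterate_succ_apply', T_sub_T, ih, pow_succ',
      mulVec_mulVec]

theorem sub_iterate_T_eq_sum [DecidableEq X] (π : X → A) (n : ℕ) (w : X → ℝ) :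
    w - (M.T π)^[n] w = ∑ k ∈ Finset.range n, (M.γ • M.Pmat π) ^ k *ᵥ (w - M.T π w) := by
  calc w - (M.T π)^[n] w = ∑ k ∈ Finset.range n, ((M.T π)^[k] w - (M.T π)^[k + 1] w) :=
        (Finset.sum_range_sub' (fun k => (M.T π)^[k] w) n).symm
    _ = _ := Finset.sum_congr rfl fun k _ => by
        rw [Function.iterate_succ_apply, iterate_T_sub_iterate_T]

theorem T_le_of_isGreedyPol {π : X → A} {v : X → ℝ} (hπ : M.IsGreedyPol π v) (π' : X → A) :
    M.T π' v ≤ M.T π v := fun x =>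
  (hπ x).symm ▸ le_ciSup (Set.finite_range fun σ : X → A => M.T σ v x).bddAbove π'

theorem sub_T_le_of_isGreedyPol [DecidableEq X] {π π' : X → A} {u v : X → ℝ}
    (hπ : M.IsGreedyPol π v) (hu : M.T π' u = u) :
    v - M.T π v ≤ (M.γ • M.Pmat π' - 1) *ᵥ (u - v) := by
  have hdiff : (M.γ • M.Pmat π' - 1) *ᵥ (u - v) = v - M.T π' v := by
    rw [sub_mulVec, ← T_sub_T, hu, one_mulVec]
    abel
  rw [hdiff]
  exact sub_le_sub_left (M.T_le_of_isGreedyPol hπ π') v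

end MDP

theorem mpi_initial_residual_bound_general
    {X A : Type} [Fintype X] [Fintype A] [DecidableEq X]
    (M : MDP X A)
    (vpi : (X → A) → X → ℝ) (hvpi : ∀ π : X → A, M.T π (vpi π) = vpi π)
    (vstar : X → ℝ)
    (πstar : X → A) (hopt : vpi πstar = vstar)
    (ℓ : ℕ)
    (v0 : X → ℝ) (π1 : X → A) (hgreedy : M.IsGreedyPol π1 v0) :
    ∀ x, M.T π1 v0 x - (M.T π1)^[ℓ] (M.T π1 v0) x ≤
      ∑ i ∈ Finset.Icc 1 ℓ,
        ((M.γ • M.Pmat π1) ^ i * (M.γ • M.Pmat πstar - (1 : Matrix X X ℝ))).mulVec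
          (fun y => vstar y - v0 y) x := by
  have hstar : M.T πstar vstar = vstar := hopt ▸ hvpi πstar
  have hstep : v0 - M.T π1 v0 ≤ (M.γ • M.Pmat πstar - 1) *ᵥ (vstar - v0) :=
    M.sub_T_le_of_isGreedyPol hgreedy hstar
  have htel : M.T π1 v0 - (M.T π1)^[ℓ] (M.T π1 v0)
      = ∑ k ∈ Finset.range ℓ, (M.γ • M.Pmat π1) ^ (k + 1) *ᵥ (v0 - M.T π1 v0) := by
    rw [M.sub_iterate_T_eq_sum, M.T_sub_T]
    simp only [pow_succ, mulVec_mulVec]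
  have hbound : M.T π1 v0 - (M.T π1)^[ℓ] (M.T π1 v0)
      ≤ ∑ i ∈ Finset.Icc 1 ℓ,
          ((M.γ • M.Pmat π1) ^ i * (M.γ • M.Pmat πstar - 1)) *ᵥ (vstar - v0) := by
    rw [htel, ← Finset.Ico_add_one_right_eq_Icc, Finset.sum_Ico_eq_sum_range, Nat.add_sub_cancel]
    refine Finset.sum_le_sum fun k _ => ?_
    rw [add_comm 1 k, ← mulVec_mulVec]
    exact mulVec_mono_of_nonneg (pow_apply_nonneg (M.discounted_Pmat_nonneg π1) _) hstep
  intro x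
  have hx := hbound x
  rw [Pi.sub_apply, Finset.sum_apply] at hx
  exact hx

/-- Bound on the initial residual `b_0` in terms of `d_0 = v_* − v_0`. -/
theorem mpi_initial_residual_bound
    {X A : Type} [Fintype X] [Fintype A] [Nonempty X] [Nonempty A] [DecidableEq X]
    (M : MDP X A)
    (vpi : (X → A) → X → ℝ) (hvpi : ∀ π : X → A, M.T π (vpi π) = vpi π)
    (vstar : X → ℝ) (hvstar : ∀ x, vstar x = ⨆ π : X → A, vpi π x)
    (πstar : X → A) (hopt : vpi πstar = vstar)
    (ℓ : ℕ) (hℓ : 1 ≤ ℓ)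
    (v0 : X → ℝ) (π1 : X → A) (hgreedy : M.IsGreedyPol π1 v0) :
    ∀ x, M.T π1 v0 x - (M.T π1)^[ℓ] (M.T π1 v0) x ≤
      ∑ i ∈ Finset.Icc 1 ℓ,
        ((M.γ • M.Pmat π1) ^ i * (M.γ • M.Pmat πstar - (1 : Matrix X X ℝ))).mulVec
          (fun y => vstar y - v0 y) x :=
  mpi_initial_residual_bound_general M vpi hvpi vstar πstar hopt ℓ v0 π1 hgreedy
end

section
/- (One-step residual recursion.) In non-stationary approximate MPI with parameters m ≥ 0 and ℓ ≥ 1 on a finite MDP, for every k ≥ 1 the residual satisfies the pointwise inequality b_k ≤ γ P_{π_{k+1}} ( (γ^ℓ P_{k,ℓ})^m b_{k−1} + (I − γ^ℓ P_{k,ℓ}) ε_k ), where P_{k,ℓ} = P_{π_k} P_{π_{k−1}} ⋯ P_{π_{k−ℓ+1}}. -/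
/-!
Each composed Bellman operator `T_{k,ℓ}` is affine with linear part `γ^ℓ P_{k,ℓ}`. Hence, writing
`v_k = T_{k,ℓ}^m u + ε_k` with `u = T_{π_k} v_{k-1}`, the difference `v_k - T_{k,ℓ} v_k` equals
`(γ^ℓ P_{k,ℓ})^m (u - T_{k,ℓ} u) + (I - γ^ℓ P_{k,ℓ}) ε_k`, and `u - T_{k,ℓ} u = b_{k-1}`.
Since `π_{k+1}` is greedy for `v_k`, monotonicity gives
`T_{k+1,ℓ} T_{π_{k+1}} v_k ≥ T_{π_{k+1}} T_{k,ℓ} v_k`, so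
`b_k ≤ T_{π_{k+1}} v_k - T_{π_{k+1}} T_{k,ℓ} v_k = γ P_{π_{k+1}} (v_k - T_{k,ℓ} v_k)`.
-/

open Matrix

theorem iterate_sub_iterate_eq_pow_mulVec {X : Type} [Fintype X] [DecidableEq X]
    {f : (X → ℝ) → X → ℝ} {B : Matrix X X ℝ} (hf : ∀ u w, f u - f w = B *ᵥ (u - w))
    (m : ℕ) (u w : X → ℝ) : f^[m] u - f^[m] w = (B ^ m) *ᵥ (u - w) := by
  induction m with
  | zero => simp
  | succ m ih =>
    rw [Function.iterate_succ_apply', Function.iterate_succ_apply', hf, ih, pow_succ',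
      ← mulVec_mulVec]

theorem iterate_add_sub_apply_iterate_add {X : Type} [Fintype X] [DecidableEq X]
    {f : (X → ℝ) → X → ℝ} {B : Matrix X X ℝ} (hf : ∀ u w, f u - f w = B *ᵥ (u - w))
    (m : ℕ) (u e : X → ℝ) :
    (f^[m] u + e) - f (f^[m] u + e) = (B ^ m) *ᵥ (u - f u) + (1 - B) *ᵥ e := by
  have hfe : f (f^[m] u + e) = f^[m] (f u) + B *ᵥ e := by
    rw [← Function.iterate_succ_apply, Function.iterate_succ_apply', ← sub_eq_iff_eq_add', hf,
      add_sub_cancel_left]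
  rw [hfe, ← iterate_sub_iterate_eq_pow_mulVec hf, sub_mulVec, one_mulVec]
  abel

namespace MDP

variable {X A : Type} [Fintype X] [Fintype A] (M : MDP X A)

theorem T_sub (σ : X → A) (u w : X → ℝ) :
    M.T σ u - M.T σ w = (M.γ • M.Pmat σ) *ᵥ (u - w) := by
  funext x
  simp only [T, Pmat, Pi.sub_apply, mulVec, dotProduct, Matrix.smul_apply, of_apply, smul_eq_mul,
    mul_sub, Finset.sum_sub_distrib, Finset.mul_sum, mul_assoc]
  ring

theorem T_mono (σ : X → A) : Monotone (M.T σ) := fun u w h x => by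
  unfold T
  gcongr with y
  · exact M.γ_pos.le
  · exact M.P_nonneg x (σ x) y
  · exact h y

theorem Tcomp_mono (π : ℤ → X → A) (n : ℕ) (k : ℤ) : Monotone (M.Tcomp π n k) := by
  induction n generalizing k with
  | zero => exact monotone_id
  | succ n ih => exact (M.T_mono (π k)).comp (ih (k - 1))

theorem Tcomp_succ_add_one (π : ℤ → X → A) (n : ℕ) (k : ℤ) (w : X → ℝ) :
    M.Tcomp π (n + 1) (k + 1) w = M.T (π (k + 1)) (M.Tcomp π n k w) := by
  simp only [Tcomp, add_sub_cancel_right]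

theorem Tcomp_succ' (π : ℤ → X → A) (n : ℕ) (k : ℤ) (w : X → ℝ) :
    M.Tcomp π (n + 1) k w = M.Tcomp π n k (M.T (π (k - n)) w) := by
  induction n generalizing k with
  | zero => simp [Tcomp]
  | succ n ih =>
    have hk : k - ↑(n + 1) = k - 1 - n := by push_cast; ring
    rw [hk]
    exact congrArg (M.T (π k)) (ih (k - 1))

theorem Tcomp_sub [DecidableEq X] (π : ℤ → X → A) (n : ℕ) (k : ℤ) (u w : X → ℝ) :
    M.Tcomp π n k u - M.Tcomp π n k w = (M.γ ^ n • M.Pcomp π n k) *ᵥ (u - w) := by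
  induction n generalizing k with
  | zero => simp [Tcomp, Pcomp]
  | succ n ih =>
    simp only [Tcomp, Pcomp]
    rw [T_sub, ih, mulVec_mulVec, smul_mul_smul_comm, pow_succ']

theorem IsGreedyPol.T_le {M : MDP X A} {σ : X → A} {v : X → ℝ} (h : M.IsGreedyPol σ v)
    (σ' : X → A) : M.T σ' v ≤ M.T σ v := fun x =>
  h x ▸ le_ciSup (Finite.bddAbove_range fun τ => M.T τ v x) σ'

/-- The two sides differ only in their innermost factor, `T_{π_{k-ℓ+1}}` versus `T_{π_{k+1}}`. -/
theorem T_Tcomp_le_Tcomp_T {π : ℤ → X → A} {k : ℤ} {v : X → ℝ}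
    (hg : M.IsGreedyPol (π (k + 1)) v) (ℓ : ℕ) :
    M.T (π (k + 1)) (M.Tcomp π ℓ k v) ≤ M.Tcomp π ℓ (k + 1) (M.T (π (k + 1)) v) := by
  cases ℓ with
  | zero => exact le_rfl
  | succ n =>
    rw [Tcomp_succ', Tcomp_succ_add_one]
    exact M.T_mono _ (M.Tcomp_mono π n k (hg.T_le _))

end MDP

theorem bres_le_of_isGreedyPol {X A : Type} [Fintype X] [Fintype A] (M : MDP X A)
    (π : ℤ → X → A) (ℓ : ℕ) (v : ℕ → X → ℝ) (k : ℕ) (hg : M.IsGreedyPol (π (k + 1)) (v k)) :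
    bres M π ℓ v k ≤ (M.γ • M.Pmat (π (k + 1))) *ᵥ (v k - M.Tcomp π ℓ k (v k)) := by
  rw [← M.T_sub]
  exact sub_le_sub_left (M.T_Tcomp_le_Tcomp_T hg ℓ) _

theorem mpi_residual_recursion_general
    {X A : Type} [Fintype X] [Fintype A] [DecidableEq X]
    (M : MDP X A)
    (m ℓ : ℕ)
    (v : ℕ → X → ℝ) (π : ℤ → X → A) (err : ℕ → X → ℝ)
    (hgreedy : ∀ k : ℕ, 1 ≤ k → M.IsGreedyPol (π (k : ℤ)) (v (k - 1)))
    (hv : ∀ k : ℕ, 1 ≤ k →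
      v k = fun x => (M.Tcomp π ℓ (k : ℤ))^[m] (M.T (π (k : ℤ)) (v (k - 1))) x + err k x)
    (k : ℕ) (hk : 1 ≤ k) :
    ∀ x, bres M π ℓ v k x ≤
      (M.γ • M.Pmat (π ((k : ℤ) + 1))).mulVec
        (fun y =>
          ((M.γ ^ ℓ • M.Pcomp π ℓ (k : ℤ)) ^ m).mulVec (bres M π ℓ v (k - 1)) y
            + ((1 : Matrix X X ℝ) - M.γ ^ ℓ • M.Pcomp π ℓ (k : ℤ)).mulVec (err k) y) x := by
  set G := M.Tcomp π ℓ k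
  set u := M.T (π k) (v (k - 1))
  have hvk : v k = G^[m] u + err k := hv k hk
  have hb_prev : bres M π ℓ v (k - 1) = u - G u := by
    obtain ⟨j, rfl⟩ : ∃ j, k = j + 1 := ⟨k - 1, by omega⟩
    simp only [Nat.add_sub_cancel]
    rfl
  have hg : M.IsGreedyPol (π (k + 1)) (v k) := by exact_mod_cast hgreedy (k + 1) (by omega)
  have hstep := bres_le_of_isGreedyPol M π ℓ v k hg
  rw [hvk, iterate_add_sub_apply_iterate_add (M.Tcomp_sub π ℓ k), ← hb_prev] at hstep
  exact hstep

/-- One-step residual recursion: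
`b_k ≤ γ P_{π_{k+1}} ((γ^ℓ P_{k,ℓ})^m b_{k−1} + (I − γ^ℓ P_{k,ℓ}) ε_k)`. -/
theorem mpi_residual_recursion
    {X A : Type} [Fintype X] [Fintype A] [Nonempty X] [Nonempty A] [DecidableEq X]
    (M : MDP X A)
    (m ℓ : ℕ) (hℓ : 1 ≤ ℓ)
    (v : ℕ → X → ℝ) (π : ℤ → X → A) (err : ℕ → X → ℝ)
    (herr0 : err 0 = fun _ => 0)
    (hgreedy : ∀ k : ℕ, 1 ≤ k → M.IsGreedyPol (π (k : ℤ)) (v (k - 1)))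
    (hv : ∀ k : ℕ, 1 ≤ k →
      v k = fun x => (M.Tcomp π ℓ (k : ℤ))^[m] (M.T (π (k : ℤ)) (v (k - 1))) x + err k x)
    (k : ℕ) (hk : 1 ≤ k) :
    ∀ x, bres M π ℓ v k x ≤
      (M.γ • M.Pmat (π ((k : ℤ) + 1))).mulVec
        (fun y =>
          ((M.γ ^ ℓ • M.Pcomp π ℓ (k : ℤ)) ^ m).mulVec (bres M π ℓ v (k - 1)) y
            + ((1 : Matrix X X ℝ) - M.γ ^ ℓ • M.Pcomp π ℓ (k : ℤ)).mulVec (err k) y) x :=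
  mpi_residual_recursion_general M m ℓ v π err hgreedy hv k hk
end
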